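/- Let M : P → ℂ be a function on an arithmetic progression P ⊆ ℤ⁺ of the form M(ν) = (∑_{i=1}^k a_i α_i^ν) / (∑_{j=1}^l b_j β_j^ν) with complex constants a_i, α_i, b_j, β_j and nonvanishing denominator on P. If M takes values in ℤ on P and M(ν) has a finite limit as ν → ∞ along P, then M is constant on P. -/

import Mathlib

open Finset Filter

lemma expsum_eq_zero : ∀ (s : Finset ℂ) (G : ℂ → ℂ),
    (∀ z : ℕ, ∑ γ ∈ s, G γ * γ ^ z = 0) → ∀ γ ∈ s, G γ = 0 := by
  intro s
  induction s using Finset.strongInduction with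
  | _ s ih =>
    intro G h γ₀ hγ₀
    have key : ∀ γ ∈ s.erase γ₀, G γ * (γ - γ₀) = 0 := by
      refine ih (s.erase γ₀) (Finset.erase_ssubset hγ₀) (fun γ => G γ * (γ - γ₀)) ?_
      intro z
      have hs : ∑ γ ∈ s, (G γ * (γ - γ₀)) * γ ^ z = 0 := by
        have e : ∑ γ ∈ s, (G γ * (γ - γ₀)) * γ ^ z
            = (∑ γ ∈ s, G γ * γ ^ (z + 1)) - γ₀ * ∑ γ ∈ s, G γ * γ ^ z := by
          rw [Finset.mul_sum, ← Finset.sum_sub_distrib]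
          refine Finset.sum_congr rfl fun γ _ => by ring
        rw [e, h (z + 1), h z]; ring
      calc ∑ γ ∈ s.erase γ₀, (G γ * (γ - γ₀)) * γ ^ z
          = ∑ γ ∈ s, (G γ * (γ - γ₀)) * γ ^ z := Finset.sum_erase s (by ring)
        _ = 0 := hs
    have herase : ∀ γ ∈ s.erase γ₀, G γ = 0 := by
      intro γ hγ
      have hne : γ ≠ γ₀ := (Finset.mem_erase.1 hγ).1
      rcases mul_eq_zero.1 (key γ hγ) with h' | h'
      · exact h'
      · exact absurd (sub_eq_zero.1 h') hne
    have h0 := h 0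
    rw [← Finset.sum_erase_add s _ hγ₀, Finset.sum_eq_zero
      (fun γ hγ => by simp [herase γ hγ])] at h0
    simpa using h0

/-- A function of geometric type on an arithmetic progression
`P = {c + m·z : z ∈ ℕ}` (with `c, m` positive) which is integer valued on `P`
and has a finite limit along `P` is constant on `P`. -/
theorem geometric_type_integer_valued_convergent_is_constant
    (c m : ℕ) (hc : 0 < c) (hm : 0 < m)
    (P : Set ℕ) (hP : P = {ν | ∃ z : ℕ, ν = c + m * z})
    (M : ℕ → ℂ) (k l : ℕ) (a α : Fin k → ℂ) (b β : Fin l → ℂ)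
    (hden : ∀ ν ∈ P, (∑ j, b j * β j ^ ν) ≠ 0)
    (hM : ∀ ν ∈ P, M ν = (∑ i, a i * α i ^ ν) / (∑ j, b j * β j ^ ν))
    (hint : ∀ ν ∈ P, ∃ n : ℤ, M ν = (n : ℂ))
    (hlim : ∃ L : ℂ, Tendsto (fun z : ℕ => M (c + m * z)) atTop (nhds L)) :
    ∀ ν₁ ∈ P, ∀ ν₂ ∈ P, M ν₁ = M ν₂ := by
  obtain ⟨L, hL⟩ := hlim
  have hmem : ∀ z : ℕ, c + m * z ∈ P := fun z => by rw [hP]; exact ⟨z, rfl⟩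
  have hcau : CauchySeq (fun z : ℕ => M (c + m * z)) := hL.cauchySeq
  rw [Metric.cauchySeq_iff] at hcau
  obtain ⟨N, hN⟩ := hcau 1 one_pos
  set v := M (c + m * N) with hv
  -- eventual constancy
  have hconst : ∀ z, N ≤ z → M (c + m * z) = v := by
    intro z hz
    obtain ⟨n₁, hn₁⟩ := hint _ (hmem z)
    obtain ⟨n₂, hn₂⟩ := hint _ (hmem N)
    have hd := hN z hz N le_rfl
    rw [hn₁, hn₂, Complex.dist_eq] at hd
    have heq : n₁ = n₂ := by
      by_contra hne
      have h1 : (1 : ℝ) ≤ |((n₁ - n₂ : ℤ) : ℝ)| := by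
        exact_mod_cast Int.one_le_abs (sub_ne_zero.2 hne)
      have h2 : ((n₁ : ℂ) - n₂) = ((n₁ - n₂ : ℤ) : ℂ) := by push_cast; ring
      rw [h2] at hd
      have h3 : ‖((n₁ - n₂ : ℤ) : ℂ)‖ = |((n₁ - n₂ : ℤ) : ℝ)| := by
        rw [Complex.norm_intCast]
      rw [h3] at hd
      linarith
    rw [hn₁, heq, ← hn₂]
  -- combined exponential sum
  set base : Fin k ⊕ Fin l → ℂ := Sum.elim α β with hbase
  set coef : Fin k ⊕ Fin l → ℂ := Sum.elim a (fun j => -v * b j) with hcoef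
  have hsum : ∀ ν : ℕ, (∑ i, a i * α i ^ ν) - v * (∑ j, b j * β j ^ ν)
      = ∑ t, coef t * base t ^ ν := by
    intro ν
    rw [Fintype.sum_sum_type]
    simp only [hcoef, hbase, Sum.elim_inl, Sum.elim_inr, Finset.mul_sum]
    rw [sub_eq_add_neg, ← Finset.sum_neg_distrib]
    congr 1
    exact Finset.sum_congr rfl fun j _ => by ring
  set img : Finset ℂ := Finset.image (fun t => base t ^ m) Finset.univ with himg
  set G : ℂ → ℂ := fun γ => ∑ t ∈ Finset.univ.filter (fun t => base t ^ m = γ),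
    coef t * base t ^ c with hG
  have hgroup : ∀ z : ℕ, ∑ γ ∈ img, G γ * γ ^ z = ∑ t, coef t * base t ^ (c + m * z) := by
    intro z
    refine Finset.sum_image' (fun t => coef t * base t ^ (c + m * z)) ?_
    intro t0 _
    rw [hG, Finset.sum_mul]
    refine Finset.sum_congr rfl fun t ht => ?_
    have ht' : base t ^ m = base t0 ^ m := (Finset.mem_filter.1 ht).2
    show coef t * base t ^ c * (base t0 ^ m) ^ z = coef t * base t ^ (c + m * z)
    rw [← ht', mul_assoc, ← pow_mul, ← pow_add]
  have hvan : ∀ z : ℕ, ∑ γ ∈ img, (G γ * γ ^ N) * γ ^ z = 0 := by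
    intro z
    have e1 : ∑ γ ∈ img, (G γ * γ ^ N) * γ ^ z = ∑ γ ∈ img, G γ * γ ^ (N + z) := by
      refine Finset.sum_congr rfl fun γ _ => by rw [pow_add]; ring
    rw [e1, hgroup (N + z), ← hsum]
    have hB := hden _ (hmem (N + z))
    have hMv := hconst (N + z) (Nat.le_add_right N z)
    rw [hM _ (hmem (N + z))] at hMv
    rw [div_eq_iff hB] at hMv
    rw [hMv]; ring
  have hGzero : ∀ γ ∈ img, G γ = 0 := by
    intro γ hγ
    have h1 := expsum_eq_zero img (fun γ => G γ * γ ^ N) hvan γ hγ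
    rcases eq_or_ne γ 0 with rfl | hne
    · rw [hG]
      refine Finset.sum_eq_zero fun t ht => ?_
      have hb0 : base t = 0 := by
        have := (Finset.mem_filter.1 ht).2
        exact pow_eq_zero_iff hm.ne' |>.1 this
      rw [hb0, zero_pow hc.ne', mul_zero]
    · exact (mul_eq_zero.1 h1).resolve_right (pow_ne_zero N hne)
  have hfinal : ∀ z : ℕ, (∑ i, a i * α i ^ (c + m * z))
      = v * ∑ j, b j * β j ^ (c + m * z) := by
    intro z
    have h0 : (0 : ℂ) = ∑ t, coef t * base t ^ (c + m * z) := by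
      rw [← hgroup z]
      exact (Finset.sum_eq_zero fun γ hγ => by rw [hGzero γ hγ, zero_mul]).symm
    have h1 := hsum (c + m * z)
    rw [← h0] at h1
    exact sub_eq_zero.1 h1
  have hMeq : ∀ ν ∈ P, M ν = v := by
    intro ν hν
    rw [hP] at hν
    obtain ⟨z, rfl⟩ := hν
    rw [hM _ (hmem z), hfinal z, mul_div_assoc, div_self (hden _ (hmem z)), mul_one]
  intro ν₁ h₁ ν₂ h₂
  rw [hMeq ν₁ h₁, hMeq ν₂ h₂]
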